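/- arXiv:0902.1402 — 3 statements merged into one kernel-verified Lean document; each statement's English description precedes it below -/
import Mathlib

section
/- In the Peano-example family of Markov selections: for the selection P^ν parametrized by a probability measure ν on [0,∞] (the law of the departing time from 0), the Markov property at the point x = 0 forces θ_t ν = φ(t) ν (where θ_t is the shift by t on [t,∞] and φ(t) = ν([t,∞])) and φ(s+t) = φ(s)φ(t); hence ν must be an exponential law (possibly degenerate: δ_0 or δ_∞). -/
open MeasureTheory

/-- The distinguished solution of `Ẋ = -X + √X` starting at `0`. -/
noncomputable def peanoXstar (t : ℝ) : ℝ := (1 - Real.exp (-t / 2)) ^ 2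

/-- The solution starting at `0` which departs from `0` at time `a ∈ [0,∞]`
(`a = ∞` being the identically zero solution). -/
noncomputable def peanoXsel (a : ENNReal) (t : ℝ) : ℝ :=
  if a = ⊤ then 0 else peanoXstar (max (t - a.toReal) 0)

/-!
Testing the Markov property against `𝟙_{0}`: a path is still at `0` at time `w` iff its
departure time is `≥ w`, and a path that has departed never returns to `0`. Hence the survival
function `φ(t) = ν[t, ∞]` is multiplicative. Continuity from above gives `ν{∞} = lim φ(t + n)`,
which extends multiplicativity to `t = ∞` and so yields the shift relation. Finally, `φ(1) = 0`
forces `φ = 0` on `(0, ∞)`, `φ(1) = 1` forces `ν{∞} = 1`, and otherwise `-log φ` is monotone and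
additive, hence linear.
-/

open Set Filter Topology
open scoped ENNReal NNReal

theorem NNReal.eq_mul_of_monotone_of_map_add {g : ℝ≥0 → ℝ} (hmono : Monotone g)
    (hadd : ∀ s t, g (s + t) = g s + g t) (t : ℝ≥0) : g t = t * g 1 := by
  let G : ℝ≥0 →+ ℝ := { toFun := g, map_zero' := by simpa using hadd 0 0, map_add' := hadd }
  have hnat : ∀ n : ℕ, g n = n * g 1 := fun n => by
    simpa [G, nsmul_eq_mul] using map_nsmul G n 1
  have hsmul : ∀ n : ℕ, g (n * t) = n * g t := fun n => by
    simpa [G, nsmul_eq_mul] using map_nsmul G n t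
  have hg1 : 0 ≤ g 1 := G.map_zero ▸ hmono (zero_le_one' ℝ≥0)
  -- With `k = ⌊n t⌋₊`, both `n g(t)` and `n t g(1)` lie between `k g(1)` and `(k + 1) g(1)`.
  have hbound : ∀ n : ℕ, n * |g t - t * g 1| ≤ g 1 := fun n => by
    set k := ⌊(n : ℝ≥0) * t⌋₊
    have hk : (k : ℝ≥0) ≤ n * t := Nat.floor_le zero_le
    have hk' : (n : ℝ≥0) * t ≤ (k + 1 : ℕ) := by
      push_cast; exact (Nat.lt_floor_add_one _).le
    have hlo := hmono hk
    have hhi := hmono hk'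
    rw [hnat, hsmul] at hlo hhi
    have hlo' : (k : ℝ) ≤ n * t := by exact_mod_cast hk
    have hhi' : (n : ℝ) * t ≤ (k + 1 : ℕ) := by exact_mod_cast hk'
    push_cast at hhi hhi'
    rw [← abs_of_nonneg (Nat.cast_nonneg (α := ℝ) n), ← abs_mul, abs_le]
    constructor <;> nlinarith
  by_contra hne
  have hpos : 0 < |g t - t * g 1| := abs_pos.mpr (sub_ne_zero.mpr hne)
  obtain ⟨n, hn⟩ := exists_nat_gt (g 1 / |g t - t * g 1|)
  have := hbound n
  rw [div_lt_iff₀ hpos] at hn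
  linarith

theorem NNReal.exists_eq_exp_of_antitone_of_map_add {φ : ℝ≥0 → ℝ} (hanti : Antitone φ)
    (hmul : ∀ s t, φ (s + t) = φ s * φ t) (hpos : 0 < φ 1) (hlt : φ 1 < 1) :
    ∃ a : ℝ, 0 < a ∧ ∀ t : ℝ≥0, φ t = Real.exp (-a * t) := by
  have hpow : ∀ n : ℕ, φ (n + 1) = φ 1 ^ (n + 1) := fun n => by
    induction n with
    | zero => simp
    | succ n ih => rw [Nat.cast_succ, hmul, ih, ← pow_succ]
  have hφpos : ∀ t, 0 < φ t := fun t =>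
    calc 0 < φ 1 ^ (⌈t⌉₊ + 1) := pow_pos hpos _
      _ = φ (⌈t⌉₊ + 1) := (hpow _).symm
      _ ≤ φ t := hanti ((Nat.le_ceil t).trans (le_add_of_nonneg_right zero_le_one))
  have hlin := NNReal.eq_mul_of_monotone_of_map_add (g := fun t => -Real.log (φ t))
    (fun s t hst => neg_le_neg (Real.log_le_log (hφpos t) (hanti hst)))
    (fun s t => by rw [hmul, Real.log_mul (hφpos s).ne' (hφpos t).ne', neg_add])
  refine ⟨-Real.log (φ 1), neg_pos.mpr (Real.log_neg hpos hlt), fun t => ?_⟩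
  rw [← Real.exp_log (hφpos t), neg_neg, ← neg_neg (Real.log (φ t)), hlin t]
  ring_nf

section SurvivalFunction

def SurvivalMul (μ : Measure ℝ≥0∞) : Prop :=
  ∀ s t : ℝ≥0, μ (Ici ((s : ℝ≥0∞) + t)) = μ (Ici (s : ℝ≥0∞)) * μ (Ici (t : ℝ≥0∞))

variable {μ : Measure ℝ≥0∞}

theorem tendsto_measure_Ici_add_natCast [IsFiniteMeasure μ] (c : ℝ≥0∞) :
    Tendsto (fun n : ℕ => μ (Ici (c + n))) atTop (𝓝 (μ {⊤})) := by
  have hinter : ⋂ n : ℕ, Ici (c + n) = {⊤} := by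
    refine subset_antisymm ?_ (by rintro _ rfl; simp)
    rw [← ENNReal.iInter_Ici_coe_nat]
    exact iInter_mono fun n => Ici_subset_Ici.mpr le_add_self
  rw [← hinter]
  exact tendsto_measure_iInter_atTop (fun _ => measurableSet_Ici.nullMeasurableSet)
    (fun m n hmn => Ici_subset_Ici.mpr (by gcongr)) ⟨0, measure_ne_top _ _⟩

theorem measure_Ici_nsmul [IsProbabilityMeasure μ]
    (hmul : SurvivalMul μ)
    (n : ℕ) (t : ℝ≥0) : μ (Ici ((n • t : ℝ≥0) : ℝ≥0∞)) = μ (Ici (t : ℝ≥0∞)) ^ n := by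
  induction n with
  | zero => simp
  | succ n ih => rw [succ_nsmul, ENNReal.coe_add, hmul, ih, pow_succ]

theorem measure_Ici_add_eq_mul [IsFiniteMeasure μ]
    (hmul : SurvivalMul μ)
    (t : ℝ≥0) (c : ℝ≥0∞) : μ (Ici (t + c)) = μ (Ici (t : ℝ≥0∞)) * μ (Ici c) := by
  cases c with
  | coe c => exact hmul t c
  | top =>
    have hlim := ENNReal.Tendsto.const_mul (a := μ (Ici (t : ℝ≥0∞)))
      (tendsto_measure_Ici_add_natCast (μ := μ) 0) (Or.inr (measure_ne_top _ _))
    have hlim' : Tendsto (fun n : ℕ => μ (Ici (t + n))) atTop (𝓝 (μ {⊤})) :=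
      tendsto_measure_Ici_add_natCast _
    simp only [zero_add] at hlim
    rw [add_top, Ici_top]
    refine tendsto_nhds_unique hlim' (hlim.congr fun n => ?_)
    rw [← ENNReal.coe_natCast, ← hmul]

theorem map_restrict_Ici_tsub_eq_smul [IsFiniteMeasure μ]
    (hmul : SurvivalMul μ)
    (t : ℝ≥0) :
    (μ.restrict (Ici (t : ℝ≥0∞))).map (fun a => a - (t : ℝ≥0∞)) = μ (Ici (t : ℝ≥0∞)) • μ := by
  have hmeas : Measurable fun a : ℝ≥0∞ => a - t := measurable_id.sub measurable_const
  refine Measure.ext_of_Ici _ _ fun c => ?_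
  have hpre : (fun a : ℝ≥0∞ => a - t) ⁻¹' Ici c ∩ Ici (t : ℝ≥0∞) = Ici (t + c) := by
    ext a
    simp only [mem_inter_iff, mem_preimage, mem_Ici]
    constructor
    · rintro ⟨hca, hta⟩
      rwa [ENNReal.le_sub_iff_add_le_left ENNReal.coe_ne_top hta] at hca
    · intro h
      have hta : (t : ℝ≥0∞) ≤ a := le_self_add.trans h
      exact ⟨(ENNReal.le_sub_iff_add_le_left ENNReal.coe_ne_top hta).mpr h, hta⟩
  rw [Measure.map_apply hmeas measurableSet_Ici, Measure.restrict_apply (hmeas measurableSet_Ici),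
    hpre, measure_Ici_add_eq_mul hmul, Measure.smul_apply, smul_eq_mul]

theorem eq_dirac_zero_of_measure_Ici_one_eq_zero [IsProbabilityMeasure μ]
    (hmul : SurvivalMul μ)
    (h : μ (Ici 1) = 0) : μ = Measure.dirac 0 := by
  refine Measure.ext_of_Ici _ _ fun c => ?_
  rcases eq_or_ne c 0 with rfl | hc
  · simp
  rw [Measure.dirac_apply' _ measurableSet_Ici,
    indicator_of_notMem (by simpa [pos_iff_ne_zero] using hc)]
  cases c with
  | top => exact measure_mono_null (Ici_subset_Ici.mpr le_top) h
  | coe t =>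
    obtain ⟨n, hn⟩ := exists_nat_ge (1 / t)
    have ht : 0 < t := by simpa [pos_iff_ne_zero] using hc
    have hle : (1 : ℝ≥0∞) ≤ ((n • t : ℝ≥0) : ℝ≥0∞) := by
      rw [nsmul_eq_mul]
      exact_mod_cast (div_le_iff₀ ht).mp hn
    have hpow := measure_Ici_nsmul hmul n t
    rw [measure_mono_null (Ici_subset_Ici.mpr hle) h] at hpow
    exact pow_eq_zero_iff' |>.mp hpow.symm |>.1

theorem eq_dirac_top_of_measure_Ici_one_eq_one [IsProbabilityMeasure μ]
    (hmul : SurvivalMul μ)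
    (h : μ (Ici 1) = 1) : μ = Measure.dirac ⊤ := by
  have htop : μ {⊤} = 1 := by
    refine tendsto_nhds_unique (tendsto_measure_Ici_add_natCast 0) ?_
    have hn : ∀ n : ℕ, μ (Ici (0 + n)) = 1 := fun n => by
      simpa [h] using measure_Ici_nsmul hmul n 1
    simp only [hn, tendsto_const_nhds]
  refine Measure.ext_of_Ici _ _ fun c => ?_
  rw [Measure.dirac_apply_of_mem (mem_Ici.mpr le_top)]
  exact le_antisymm prob_le_one
    (htop ▸ measure_mono (singleton_subset_iff.mpr (mem_Ici.mpr le_top)))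

theorem exists_measure_Ici_eq_exp [IsProbabilityMeasure μ]
    (hmul : SurvivalMul μ)
    (h0 : μ (Ici 1) ≠ 0) (h1 : μ (Ici 1) ≠ 1) :
    ∃ a : ℝ, 0 < a ∧ ∀ t : ℝ≥0, μ (Ici (t : ℝ≥0∞)) = ENNReal.ofReal (Real.exp (-a * t)) := by
  obtain ⟨a, ha, hexp⟩ := NNReal.exists_eq_exp_of_antitone_of_map_add
    (φ := fun t => μ.real (Ici (t : ℝ≥0∞)))
    (fun s t hst => measureReal_mono (Ici_subset_Ici.mpr (by exact_mod_cast hst)))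
    (fun s t => by simp only [measureReal_def, ENNReal.coe_add, hmul s t, ENNReal.toReal_mul])
    (ENNReal.toReal_pos (by simpa using h0) (measure_ne_top _ _))
    (by simpa [measureReal_def] using (ENNReal.toReal_lt_toReal (measure_ne_top _ _)
      ENNReal.one_ne_top).mpr (prob_le_one.lt_of_ne h1))
  exact ⟨a, ha, fun t => by rw [← hexp, ofReal_measureReal]⟩

end SurvivalFunction

theorem peanoXstar_eq_zero_iff {r : ℝ} : peanoXstar r = 0 ↔ r = 0 := by
  simp [peanoXstar, sub_eq_zero, eq_comm (a := (1 : ℝ)), Real.exp_eq_one_iff]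

theorem peanoXsel_eq_zero_iff (a : ℝ≥0∞) (w : ℝ) : peanoXsel a w = 0 ↔ ENNReal.ofReal w ≤ a := by
  rcases eq_or_ne a ⊤ with rfl | ha
  · simp [peanoXsel]
  · simp [peanoXsel, ha, peanoXstar_eq_zero_iff, ENNReal.ofReal_le_iff_le_toReal ha]

def PeanoMarkovAtZero (ν : Measure ℝ≥0∞) : Prop :=
  ∀ f : ℝ → ℝ, Measurable f → (∀ y, |f y| ≤ 1) →
    ∀ s t : ℝ, 0 ≤ s → 0 ≤ t →
      ∫ a, f (peanoXsel a (t + s)) ∂ν =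
        (∫ a in Set.Iio (ENNReal.ofReal t), f (peanoXstar (t + s - a.toReal)) ∂ν) +
          (ν (Set.Ici (ENNReal.ofReal t))).toReal * ∫ b, f (peanoXsel b s) ∂ν

theorem PeanoMarkovAtZero.survivalMul {ν : Measure ℝ≥0∞} [IsFiniteMeasure ν]
    (hν : PeanoMarkovAtZero ν) : SurvivalMul ν := by
  intro s t
  set f : ℝ → ℝ := ({0} : Set ℝ).indicator 1
  have hstill : ∀ w : ℝ, ∫ a, f (peanoXsel a w) ∂ν = ν.real (Ici (ENNReal.ofReal w)) :=
    fun w => by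
      rw [← integral_indicator_one measurableSet_Ici]
      congr 1 with a
      simp only [f, indicator_apply, mem_singleton_iff, mem_Ici, peanoXsel_eq_zero_iff,
        Pi.one_apply]
  have hdeparted : ∫ a in Iio (ENNReal.ofReal s), f (peanoXstar (s + t - a.toReal)) ∂ν = 0 := by
    refine setIntegral_eq_zero_of_forall_eq_zero fun a ha => indicator_of_notMem ?_ _
    have : a.toReal < s := ENNReal.toReal_lt_of_lt_ofReal ha
    rw [mem_singleton_iff, peanoXstar_eq_zero_iff]
    linarith [t.coe_nonneg]
  have h := hν f (measurable_const.indicator (measurableSet_singleton 0))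
    (fun y => by by_cases hy : y = 0 <;> simp [f, hy]) t s t.coe_nonneg s.coe_nonneg
  rw [hstill, hdeparted, hstill, zero_add] at h
  simp only [← NNReal.coe_add, ENNReal.ofReal_coe_nnreal, measureReal_def] at h
  rwa [← ENNReal.toReal_mul, ENNReal.toReal_eq_toReal_iff' (measure_ne_top _ _)
    (ENNReal.mul_ne_top (measure_ne_top _ _) (measure_ne_top _ _)), ENNReal.coe_add] at h

/-- In the Peano example, for the selection `P^ν` with departing-time law `ν`, the Markov
property at `x = 0` forces the shift relation `θ_t ν = φ(t) ν` and the multiplicativity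
`φ(s+t) = φ(s)φ(t)` of the survival function `φ(t) = ν([t,∞])`; hence `ν` is an exponential
law (possibly the degenerate ones `δ₀` or `δ_∞`). -/
theorem stmt_11 (ν : Measure ENNReal) [IsProbabilityMeasure ν]
    -- Markov property at `0`: `E^{P^ν_0}[f(ξ_{t+s})] = E^{P^ν_0}[E^{P^ν_{ξ_t}}[f(ξ_s)]]`,
    -- written out using the deterministic dynamics away from `0`
    (hMarkov : ∀ f : ℝ → ℝ, Measurable f → (∀ y, |f y| ≤ 1) →
      ∀ s t : ℝ, 0 ≤ s → 0 ≤ t →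
        ∫ a, f (peanoXsel a (t + s)) ∂ν =
          (∫ a in Set.Iio (ENNReal.ofReal t), f (peanoXstar (t + s - a.toReal)) ∂ν) +
            (ν (Set.Ici (ENNReal.ofReal t))).toReal * ∫ b, f (peanoXsel b s) ∂ν) :
    (∀ t : NNReal,
      (ν.restrict (Set.Ici (t : ENNReal))).map (fun a => a - (t : ENNReal)) =
        ν (Set.Ici (t : ENNReal)) • ν) ∧
    (∀ s t : NNReal,
      ν (Set.Ici ((s : ENNReal) + (t : ENNReal))) =
        ν (Set.Ici (s : ENNReal)) * ν (Set.Ici (t : ENNReal))) ∧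
    (ν = Measure.dirac 0 ∨ ν = Measure.dirac ⊤ ∨
      ∃ a : ℝ, 0 < a ∧ ∀ t : NNReal,
        ν (Set.Ici (t : ENNReal)) = ENNReal.ofReal (Real.exp (-a * t))) := by
  have hmul := PeanoMarkovAtZero.survivalMul hMarkov
  refine ⟨map_restrict_Ici_tsub_eq_smul hmul, hmul, ?_⟩
  rcases eq_or_ne (ν (Ici 1)) 0 with h0 | h0
  · exact Or.inl (eq_dirac_zero_of_measure_Ici_one_eq_zero hmul h0)
  rcases eq_or_ne (ν (Ici 1)) 1 with h1 | h1
  · exact Or.inr (Or.inl (eq_dirac_top_of_measure_Ici_one_eq_one hmul h1))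
  · exact Or.inr (Or.inr (exists_measure_Ici_eq_exp hmul h0 h1))
end

section
/- For the exponential-rate selections of the Peano example, the resolvent functionals satisfy J_{λ,f}(P_0^a) − J_{λ,f}(P_0^b) = λ(b−a)/((λ+a)(λ+b)) · (J_{λ,f}(P_0^0) − J_{λ,f}(P_0^∞)) for all rates a, b ∈ [0,∞) and all λ > 0; consequently for each λ and f, the map a ↦ J_{λ,f}(P_0^a) is monotone and attains its extrema only at a = 0 and a = ∞. -/
/-!
Conditionally on the exponential departure time `s`, the path sits at `0` until `s` and then
follows the time-shifted `X⋆`, so its resolvent is `f 0 / λ + e^{-λ s} (J(P_0^∞) - f 0 / λ)`.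
Averaging `e^{-λ s}` over the exponential law of rate `a` gives `a / (λ + a)`, hence `J(P_0^a)`
is the convex combination of `J(P_0^0)` and `J(P_0^∞)` with weight `a / (λ + a) ∈ [0, 1)` on the
latter. That weight is increasing in `a` and vanishes only at `a = 0`, which gives every claim.
-/

open MeasureTheory

/-- The resolvent functional `J_{λ,f}(P_0^a)` of the exponential-rate-`a` selection started
at `0` (rate `a = 0` corresponds to the solution staying at `0` forever). -/
noncomputable def peanoJ (l : ℝ) (f : ℝ → ℝ) (a : ℝ) : ℝ :=
  if a = 0 then f 0 / l
  else ∫ s in Set.Ioi (0:ℝ),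
    a * Real.exp (-a * s) *
      ∫ t in Set.Ioi (0:ℝ), Real.exp (-l * t) * f (peanoXstar (max (t - s) 0))

/-- The resolvent functional `J_{λ,f}(P_0^∞)` of the immediate-departure selection. -/
noncomputable def peanoJinf (l : ℝ) (f : ℝ → ℝ) : ℝ :=
  ∫ t in Set.Ioi (0:ℝ), Real.exp (-l * t) * f (peanoXstar t)

open Set Real AffineMap

theorem setIntegral_Ioi_comp_add_right {E : Type*} [NormedAddCommGroup E] [NormedSpace ℝ E]
    (g : ℝ → E) (a s : ℝ) : ∫ x in Ioi a, g (x + s) = ∫ x in Ioi (a + s), g x := by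
  have h := (measurePreserving_add_right volume s).setIntegral_preimage_emb
    (MeasurableEquiv.addRight s).measurableEmbedding g (Ioi (a + s))
  rwa [show (· + s) ⁻¹' Ioi (a + s) = Ioi a by ext; simp] at h

theorem integral_Ioi_exp_neg_mul {c : ℝ} (hc : 0 < c) :
    ∫ x in Ioi 0, exp (-c * x) = 1 / c := by
  rw [integral_exp_mul_Ioi (neg_neg_of_pos hc), mul_zero, exp_zero]
  field_simp

theorem integral_exp_neg_mul {c : ℝ} (hc : 0 < c) (s : ℝ) :
    ∫ x in (0)..s, exp (-c * x) = (1 - exp (-c * s)) / c := by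
  rw [← intervalIntegral.integral_Ioi_sub_Ioi' (exp_neg_integrableOn_Ioi 0 hc)
      (exp_neg_integrableOn_Ioi s hc),
    integral_Ioi_exp_neg_mul hc, integral_exp_mul_Ioi (neg_neg_of_pos hc)]
  field_simp

theorem integrableOn_exp_neg_mul_mul_of_bounded {l M : ℝ} (hl : 0 < l) {g : ℝ → ℝ}
    (hg : Measurable g) (hM : ∀ y, |g y| ≤ M) :
    IntegrableOn (fun t => exp (-l * t) * g t) (Ioi 0) :=
  (exp_neg_integrableOn_Ioi 0 hl).mul_bdd hg.aestronglyMeasurable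
    (ae_of_all _ fun t => (Real.norm_eq_abs _).trans_le (hM t))

theorem integral_exp_neg_mul_comp_delay {l M s : ℝ} (hl : 0 < l) (hs : 0 ≤ s) {g : ℝ → ℝ}
    (hg : Measurable g) (hM : ∀ y, |g y| ≤ M) :
    ∫ t in Ioi 0, exp (-l * t) * g (max (t - s) 0) =
      g 0 / l + exp (-l * s) * ((∫ t in Ioi 0, exp (-l * t) * g t) - g 0 / l) := by
  have hint := integrableOn_exp_neg_mul_mul_of_bounded (g := fun t => g (max (t - s) 0)) hl
    (hg.comp ((measurable_id.sub_const s).max measurable_const)) fun t => hM _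
  rw [← intervalIntegral.integral_interval_add_Ioi hint (hint.mono_set (Ioi_subset_Ioi hs))]
  have hwait : ∫ t in (0)..s, exp (-l * t) * g (max (t - s) 0) = (1 - exp (-l * s)) / l * g 0 := by
    rw [← integral_exp_neg_mul hl s, ← intervalIntegral.integral_mul_const]
    refine intervalIntegral.integral_congr fun t ht => ?_
    rw [uIcc_of_le hs] at ht
    simp only [max_eq_right (sub_nonpos.2 ht.2)]
  have hmove : ∫ t in Ioi s, exp (-l * t) * g (max (t - s) 0) =
      exp (-l * s) * ∫ t in Ioi 0, exp (-l * t) * g t := by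
    rw [← zero_add s, ← setIntegral_Ioi_comp_add_right, zero_add, ← integral_const_mul]
    refine setIntegral_congr_fun measurableSet_Ioi fun t ht => ?_
    rw [add_sub_cancel_right, max_eq_left (le_of_lt ht), mul_add, exp_add]
    ring
  rw [hwait, hmove]
  field_simp
  ring

theorem integral_exponential_law_mul_add_exp {a l : ℝ} (ha : 0 < a) (hl : 0 < l) (A B : ℝ) :
    ∫ s in Ioi 0, a * exp (-a * s) * (A + exp (-l * s) * B) = A + a / (l + a) * B := by
  have hal : 0 < a + l := by linarith
  have hsplit : ∀ s : ℝ, a * exp (-a * s) * (A + exp (-l * s) * B) =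
      a * A * exp (-a * s) + a * B * exp (-(a + l) * s) := fun s => by
    rw [show -(a + l) * s = -a * s + -l * s by ring, exp_add]; ring
  simp only [hsplit]
  rw [integral_add ((exp_neg_integrableOn_Ioi 0 ha).const_mul _)
      ((exp_neg_integrableOn_Ioi 0 hal).const_mul _),
    integral_const_mul, integral_const_mul, integral_Ioi_exp_neg_mul ha,
    integral_Ioi_exp_neg_mul hal]
  field_simp
  ring

theorem peanoXstar_zero : peanoXstar 0 = 0 := by simp [peanoXstar]

theorem continuous_peanoXstar : Continuous peanoXstar := by
  unfold peanoXstar; fun_prop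

section Peano

variable {l : ℝ} {f : ℝ → ℝ}

theorem peanoJ_zero : peanoJ l f 0 = f 0 / l := if_pos rfl

theorem peanoJ_eq_lineMap (hl : 0 < l) (hf : Measurable f) {M : ℝ} (hM : ∀ y, |f y| ≤ M)
    {a : ℝ} (ha : 0 ≤ a) :
    peanoJ l f a = lineMap (peanoJ l f 0) (peanoJinf l f) (a / (l + a)) := by
  rw [lineMap_apply_ring', peanoJ_zero]
  rcases ha.eq_or_lt with rfl | ha
  · simp [peanoJ_zero]
  have hdelay : ∀ s ∈ Ioi (0 : ℝ), a * exp (-a * s) *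
      ∫ t in Ioi 0, exp (-l * t) * f (peanoXstar (max (t - s) 0)) =
      a * exp (-a * s) * (f 0 / l + exp (-l * s) * (peanoJinf l f - f 0 / l)) := fun s hs => by
    have h := integral_exp_neg_mul_comp_delay hl (le_of_lt hs)
      (hf.comp continuous_peanoXstar.measurable) fun y => hM (peanoXstar y)
    simp only [Function.comp_apply, peanoXstar_zero] at h
    rw [h, peanoJinf]
  rw [peanoJ, if_neg ha.ne', setIntegral_congr_fun measurableSet_Ioi hdelay,
    integral_exponential_law_mul_add_exp ha hl]
  ring

end Peano

theorem div_add_self_mem_Ico {l a : ℝ} (hl : 0 < l) (ha : 0 ≤ a) : a / (l + a) ∈ Ico 0 1 :=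
  ⟨div_nonneg ha (by linarith), (div_lt_one (by linarith)).2 (by linarith)⟩

theorem monotoneOn_div_add_self {l : ℝ} (hl : 0 < l) : MonotoneOn (fun a => a / (l + a)) (Ici 0) :=
  fun x hx y hy hxy => by
    rw [div_le_div_iff₀ (by linarith [mem_Ici.1 hx]) (by linarith [mem_Ici.1 hy])]
    nlinarith

/-- For the exponential-rate selections of the Peano example, the resolvent functionals
satisfy
`J_{λ,f}(P_0^a) − J_{λ,f}(P_0^b) = λ(b−a)/((λ+a)(λ+b)) (J_{λ,f}(P_0^0) − J_{λ,f}(P_0^∞))`;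
consequently `a ↦ J_{λ,f}(P_0^a)` is monotone and its extrema are attained only at the
degenerate rates `a = 0` and `a = ∞`. -/
theorem stmt_12 (l : ℝ) (hl : 0 < l) (f : ℝ → ℝ) (hf : Measurable f)
    (hfb : ∃ M, ∀ y, |f y| ≤ M) :
    (∀ a b : ℝ, 0 ≤ a → 0 ≤ b →
      peanoJ l f a - peanoJ l f b =
        l * (b - a) / ((l + a) * (l + b)) * (peanoJ l f 0 - peanoJinf l f)) ∧
    (MonotoneOn (peanoJ l f) (Set.Ici 0) ∨ AntitoneOn (peanoJ l f) (Set.Ici 0)) ∧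
    (∀ a : ℝ, 0 ≤ a →
      min (peanoJ l f 0) (peanoJinf l f) ≤ peanoJ l f a ∧
      peanoJ l f a ≤ max (peanoJ l f 0) (peanoJinf l f)) ∧
    (peanoJ l f 0 ≠ peanoJinf l f → ∀ a : ℝ, 0 < a →
      peanoJ l f a ≠ peanoJ l f 0 ∧ peanoJ l f a ≠ peanoJinf l f) := by
  obtain ⟨M, hM⟩ := hfb
  have hJ := fun a (ha : 0 ≤ a) => peanoJ_eq_lineMap hl hf hM ha
  refine ⟨fun a b ha hb => ?_, ?_, fun a ha => ?_, fun hne a ha => ?_⟩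
  · have : l + a ≠ 0 := by positivity
    have : l + b ≠ 0 := by positivity
    rw [hJ a ha, hJ b hb, lineMap_apply_ring', lineMap_apply_ring']
    field_simp
    ring
  · rcases le_total (peanoJ l f 0) (peanoJinf l f) with h | h
    · refine .inl fun a ha b hb hab => ?_
      rw [hJ a ha, hJ b hb]
      exact lineMap_mono h (monotoneOn_div_add_self hl ha hb hab)
    · refine .inr fun a ha b hb hab => ?_
      rw [hJ a ha, hJ b hb]
      exact lineMap_anti h (monotoneOn_div_add_self hl ha hb hab)
  · have hmem := lineMap_mem_segment ℝ (peanoJ l f 0) (peanoJinf l f)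
      (Ico_subset_Icc_self (div_add_self_mem_Ico hl ha))
    rw [segment_eq_uIcc, ← hJ a ha] at hmem
    exact hmem
  · obtain ⟨-, hlt⟩ := div_add_self_mem_Ico hl ha.le
    have hpos : 0 < a / (l + a) := by positivity
    rw [hJ a ha.le]
    simp [lineMap_eq_left_iff, lineMap_eq_right_iff, hne, hpos.ne', hlt.ne]
end

section
/- Let W be a standard one-dimensional Brownian motion and α ∈ (0,1/2). Then for every x ∈ ℝ, the additive functional S_t^x = ∫₀^t σ_α(x + W_s)^{-2} ds is almost surely finite for all t ≥ 0, strictly increasing and continuous in t, with S_t^x → ∞ as t → ∞. -/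
open MeasureTheory ProbabilityTheory Filter Set Topology
open scoped ENNReal NNReal

/-!
Since `σ_α⁻² ≤ 4 + 4|y|^(-2α) 1_{|y| ≤ 1}` and the density of `N(x, s)` is at most `s^(-1/2)`,
`E σ_α(x + B_s)⁻² = O(1 + s^(-1/2))` is integrable on `(0, T]`; by Tonelli `E S_T < ∞`, so
`S_T < ∞` a.s. The same Tonelli argument shows that `x + B` spends a.s. zero time at `0`, the
marginals having no atoms. Elsewhere `σ_α⁻² ≥ 1`, so `S_b - S_a ≥ b - a`: `S` is strictly
increasing and unbounded, and it is continuous as the primitive of a locally integrable function.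
-/

/-- `σ_α(y)⁻²`. At `y = 0` this is `0⁻¹ ^ 2 = 0` rather than `∞`, so the time that `x + B`
spends at `0` has to be shown negligible separately. -/
noncomputable def sigmaNegSq (α y : ℝ) : ℝ≥0∞ :=
  ENNReal.ofReal ((|y| ^ α / (1 + |y| ^ α))⁻¹ ^ 2)

lemma measurable_sigmaNegSq (α : ℝ) : Measurable (sigmaNegSq α) := by
  unfold sigmaNegSq; fun_prop

lemma inv_abs_rpow_div_one_add_abs_rpow {α y : ℝ} (hy : y ≠ 0) :
    (|y| ^ α / (1 + |y| ^ α))⁻¹ = 1 + |y| ^ (-α) := by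
  have hu : 0 < |y| ^ α := Real.rpow_pos_of_pos (abs_pos.2 hy) α
  rw [inv_div, Real.rpow_neg (abs_nonneg y)]
  field_simp
  ring

lemma one_le_sigmaNegSq (α : ℝ) {y : ℝ} (hy : y ≠ 0) : 1 ≤ sigmaNegSq α y := by
  have hv : 0 ≤ |y| ^ (-α) := Real.rpow_nonneg (abs_nonneg y) _
  rw [sigmaNegSq, inv_abs_rpow_div_one_add_abs_rpow hy, ENNReal.one_le_ofReal]
  nlinarith

lemma sigmaNegSq_le {α : ℝ} (hα : 0 < α) (y : ℝ) :
    sigmaNegSq α y ≤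
      4 + (Icc (-1) 1).indicator (fun z => ENNReal.ofReal (4 * |z| ^ (-(2 * α)))) y := by
  rcases eq_or_ne y 0 with rfl | hy
  · simp [sigmaNegSq, Real.zero_rpow hα.ne']
  have hsq : (|y| ^ (-α)) ^ 2 = |y| ^ (-(2 * α)) := by
    rw [← Real.rpow_natCast, ← Real.rpow_mul (abs_nonneg y)]
    ring_nf
  rw [sigmaNegSq, inv_abs_rpow_div_one_add_abs_rpow hy]
  rcases le_or_gt |y| 1 with hle | hgt
  · have hu : 1 ≤ |y| ^ (-α) :=
      Real.one_le_rpow_of_pos_of_le_one_of_nonpos (abs_pos.2 hy) hle (by linarith)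
    rw [indicator_of_mem (mem_Icc.2 (abs_le.1 hle)), ← hsq]
    refine le_add_left (ENNReal.ofReal_le_ofReal ?_)
    nlinarith
  · have hu : |y| ^ (-α) ≤ 1 := Real.rpow_le_one_of_one_le_of_nonpos hgt.le (by linarith)
    have hu0 : 0 ≤ |y| ^ (-α) := Real.rpow_nonneg (abs_nonneg y) _
    have h4 : (1 + |y| ^ (-α)) ^ 2 ≤ 4 := by nlinarith
    exact le_add_right ((ENNReal.ofReal_le_ofReal h4).trans (by simp))

lemma locallyIntegrable_abs_rpow_neg {β : ℝ} (hβ : β < 1) :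
    LocallyIntegrable (fun z : ℝ => |z| ^ (-β)) := by
  refine locallyIntegrable_of_norm_le_rpow (C := 1) (by simp) (by simpa using hβ) ?_
    (continuous_abs.measurable.pow_const _).aestronglyMeasurable
  refine ae_of_all _ fun z => ?_
  simp [abs_nonneg, Real.abs_rpow_of_nonneg]

lemma gaussianPDF_le_inv_sqrt (m : ℝ) (v : ℝ≥0) (y : ℝ) :
    gaussianPDF m v y ≤ ENNReal.ofReal (√v)⁻¹ := by
  rcases eq_or_ne v 0 with rfl | hv
  · simp
  refine ENNReal.ofReal_le_ofReal ?_
  have hexp : Real.exp (-(y - m) ^ 2 / (2 * v)) ≤ 1 :=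
    Real.exp_le_one_iff.2 (div_nonpos_of_nonpos_of_nonneg (by nlinarith [sq_nonneg (y - m)])
      (by positivity))
  have hsqrt : √(v : ℝ) ≤ √(2 * Real.pi * v) :=
    Real.sqrt_le_sqrt (by nlinarith [Real.pi_gt_three, v.coe_nonneg])
  calc gaussianPDFReal m v y
      ≤ (√(2 * Real.pi * v))⁻¹ := by
        rw [gaussianPDFReal]
        exact mul_le_of_le_one_right (by positivity) hexp
    _ ≤ (√v)⁻¹ := inv_anti₀ (Real.sqrt_pos.2 (by positivity)) hsqrt

lemma lintegral_gaussianReal_le (m : ℝ) {v : ℝ≥0} (hv : v ≠ 0) (f : ℝ → ℝ≥0∞) :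
    ∫⁻ y, f y ∂gaussianReal m v ≤ ENNReal.ofReal (√v)⁻¹ * ∫⁻ y, f y := by
  rw [gaussianReal_of_var_ne_zero m hv, ← lintegral_const_mul' _ _ ENNReal.ofReal_ne_top]
  exact (lintegral_withDensity_le_lintegral_mul _ (measurable_gaussianPDF m v) f).trans
    (lintegral_mono fun y => mul_le_mul_left (gaussianPDF_le_inv_sqrt m v y) _)

lemma exists_lintegral_sigmaNegSq_gaussianReal_le {α : ℝ} (hα : α ∈ Ioo 0 (1 / 2)) :
    ∃ C < ∞, ∀ (m : ℝ) (v : ℝ≥0), v ≠ 0 →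
      ∫⁻ y, sigmaNegSq α y ∂gaussianReal m v ≤ 4 + ENNReal.ofReal (√v)⁻¹ * C := by
  set k : ℝ → ℝ≥0∞ := (Icc (-1) 1).indicator fun z => ENNReal.ofReal (4 * |z| ^ (-(2 * α)))
  refine ⟨∫⁻ z, k z, ?_, fun m v hv => ?_⟩
  · have hint := ((locallyIntegrable_abs_rpow_neg (β := 2 * α) (by linarith [hα.2])
      ).integrableOn_isCompact (isCompact_Icc (a := -1) (b := 1))).const_mul 4
    rw [lintegral_indicator measurableSet_Icc]
    exact Integrable.lintegral_lt_top hint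
  calc ∫⁻ y, sigmaNegSq α y ∂gaussianReal m v
      ≤ ∫⁻ y, (4 + k y) ∂gaussianReal m v := lintegral_mono (sigmaNegSq_le hα.1)
    _ = 4 + ∫⁻ y, k y ∂gaussianReal m v := by
        rw [lintegral_add_left measurable_const, lintegral_const, measure_univ, mul_one]
    _ ≤ 4 + ENNReal.ofReal (√v)⁻¹ * ∫⁻ z, k z := by
        gcongr; exact lintegral_gaussianReal_le m hv k

lemma setLIntegral_Ioc_inv_sqrt_lt_top (T : ℝ) :
    ∫⁻ s in Ioc 0 T, ENNReal.ofReal (√s)⁻¹ < ∞ := by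
  have hint := ((locallyIntegrable_abs_rpow_neg (β := 1 / 2) (by norm_num)
    ).integrableOn_isCompact (isCompact_Icc (a := 0) (b := T))).mono_set Ioc_subset_Icc_self
  refine lt_of_eq_of_lt (setLIntegral_congr_fun measurableSet_Ioc fun s hs => ?_)
    hint.lintegral_lt_top
  rw [abs_of_pos hs.1, Real.sqrt_eq_rpow, Real.rpow_neg hs.1.le]

lemma setLIntegral_Ioc_add_inv_sqrt_mul_lt_top {a C : ℝ≥0∞} (ha : a ≠ ∞) (hC : C ≠ ∞) (T : ℝ) :
    ∫⁻ s in Ioc 0 T, (a + ENNReal.ofReal (√s)⁻¹ * C) < ∞ := by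
  rw [lintegral_add_left measurable_const, setLIntegral_const, lintegral_mul_const' _ _ hC]
  exact ENNReal.add_lt_top.2 ⟨ENNReal.mul_lt_top ha.lt_top (by simp),
    ENNReal.mul_lt_top (setLIntegral_Ioc_inv_sqrt_lt_top T) hC.lt_top⟩

lemma map_const_add_eq_gaussianReal {Ω : Type*} [MeasurableSpace Ω] {P : Measure Ω}
    {B : ℝ → Ω → ℝ} (h0 : ∀ᵐ ω ∂P, B 0 ω = 0) {t : ℝ} (hBt : Measurable (B t)) {v : ℝ≥0}
    (hlaw : P.map (fun ω => B t ω - B 0 ω) = gaussianReal 0 v) (x : ℝ) :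
    P.map (fun ω => x + B t ω) = gaussianReal x v := by
  have hBt_law : P.map (B t) = gaussianReal 0 v := by
    rw [← hlaw]
    exact Measure.map_congr (h0.mono fun ω hω => by simp [hω])
  calc P.map (fun ω => x + B t ω) = (P.map (B t)).map (x + ·) :=
        (Measure.map_map (measurable_const_add x) hBt).symm
    _ = gaussianReal x v := by rw [hBt_law, gaussianReal_map_const_add, zero_add]

section AEContinuousPaths

variable {Ω : Type*} [MeasurableSpace Ω] {P : Measure Ω} {X : ℝ → Ω → ℝ}

lemma aemeasurable_uncurry_of_ae_continuous (hmeas : ∀ t, Measurable (X t))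
    (hpath : ∀ᵐ ω ∂P, Continuous fun t => X t ω) (μ : Measure ℝ) :
    AEMeasurable (fun p : Ω × ℝ => X p.2 p.1) (P.prod μ) := by
  classical
  obtain ⟨S, hS, hSmeas, hScont⟩ := hpath.exists_measurable_mem
  set Y : ℝ → Ω → ℝ := fun t => S.piecewise (X t) 0
  have hYcont : ∀ ω, Continuous fun t => Y t ω := fun ω => by
    by_cases hω : ω ∈ S
    · simpa [Y, hω] using hScont ω hω
    · simpa [Y, hω] using continuous_const
  have hY : Measurable (Function.uncurry Y) :=
    measurable_uncurry_of_continuous_of_measurable hYcont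
      fun t => (hmeas t).piecewise hSmeas measurable_const
  refine ⟨fun p => Y p.2 p.1, hY.comp measurable_swap, ?_⟩
  filter_upwards [Measure.quasiMeasurePreserving_fst.ae hS] with p hp
  exact (piecewise_eq_of_mem S (X p.2) 0 hp).symm

variable [SFinite P] (μ : Measure ℝ) [SFinite μ]

lemma lintegral_prod_comp_eq (hmeas : ∀ t, Measurable (X t))
    (hpath : ∀ᵐ ω ∂P, Continuous fun t => X t ω) {h : ℝ → ℝ≥0∞} (hh : Measurable h) :
    ∫⁻ p, h (X p.2 p.1) ∂(P.prod μ) = ∫⁻ s, ∫⁻ y, h y ∂(P.map (X s)) ∂μ := by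
  have hF : AEMeasurable (fun p : Ω × ℝ => h (X p.2 p.1)) (P.prod μ) :=
    hh.comp_aemeasurable (aemeasurable_uncurry_of_ae_continuous hmeas hpath μ)
  rw [lintegral_prod_symm _ hF]
  simp_rw [lintegral_map hh (hmeas _)]

lemma ae_lintegral_comp_lt_top (hmeas : ∀ t, Measurable (X t))
    (hpath : ∀ᵐ ω ∂P, Continuous fun t => X t ω) {h : ℝ → ℝ≥0∞} (hh : Measurable h)
    (hfin : ∫⁻ s, ∫⁻ y, h y ∂(P.map (X s)) ∂μ ≠ ∞) :
    ∀ᵐ ω ∂P, ∫⁻ s, h (X s ω) ∂μ < ∞ := by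
  have hF : AEMeasurable (fun p : Ω × ℝ => h (X p.2 p.1)) (P.prod μ) :=
    hh.comp_aemeasurable (aemeasurable_uncurry_of_ae_continuous hmeas hpath μ)
  refine ae_lt_top' hF.lintegral_prod_right' ?_
  rwa [← lintegral_prod _ hF, lintegral_prod_comp_eq μ hmeas hpath hh]

lemma ae_ae_ne_of_map_singleton_eq_zero (hmeas : ∀ t, Measurable (X t))
    (hpath : ∀ᵐ ω ∂P, Continuous fun t => X t ω) {c : ℝ}
    (hnull : ∀ᵐ s ∂μ, P.map (X s) {c} = 0) :
    ∀ᵐ ω ∂P, ∀ᵐ s ∂μ, X s ω ≠ c := by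
  set h : ℝ → ℝ≥0∞ := ({c} : Set ℝ).indicator 1
  have hh : Measurable h := measurable_one.indicator (measurableSet_singleton c)
  have hzero : ∫⁻ p, h (X p.2 p.1) ∂(P.prod μ) = 0 := by
    rw [lintegral_prod_comp_eq μ hmeas hpath hh]
    refine lintegral_eq_zero_of_ae_eq_zero ?_
    filter_upwards [hnull] with s hs
    rwa [lintegral_indicator_one (measurableSet_singleton c)]
  have hae := (lintegral_eq_zero_iff' (hh.comp_aemeasurable
    (aemeasurable_uncurry_of_ae_continuous hmeas hpath μ))).1 hzero
  filter_upwards [Measure.ae_ae_of_ae_prod hae] with ω hω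
  filter_upwards [hω] with s hs hc
  simp [h, hc] at hs

lemma ae_setLIntegral_sigmaNegSq_lt_top (hmeas : ∀ t, Measurable (X t))
    (hpath : ∀ᵐ ω ∂P, Continuous fun t => X t ω) {x : ℝ}
    (hlaw : ∀ s, 0 < s → P.map (X s) = gaussianReal x s.toNNReal) {α : ℝ}
    (hα : α ∈ Ioo 0 (1 / 2)) (T : ℝ) :
    ∀ᵐ ω ∂P, ∫⁻ s in Ioc 0 T, sigmaNegSq α (X s ω) < ∞ := by
  obtain ⟨C, hC, hgauss⟩ := exists_lintegral_sigmaNegSq_gaussianReal_le hα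
  refine ae_lintegral_comp_lt_top _ hmeas hpath (measurable_sigmaNegSq α) ?_
  refine ne_top_of_le_ne_top (setLIntegral_Ioc_add_inv_sqrt_mul_lt_top (a := 4) (by simp)
    hC.ne T).ne (setLIntegral_mono_ae (by fun_prop) (ae_of_all _ fun s hs => ?_))
  simpa [hlaw s hs.1, Real.coe_toNNReal s hs.1.le] using
    hgauss x s.toNNReal (Real.toNNReal_pos.2 hs.1).ne'

lemma ae_ae_ne_of_map_eq_gaussianReal (hmeas : ∀ t, Measurable (X t))
    (hpath : ∀ᵐ ω ∂P, Continuous fun t => X t ω) {x : ℝ}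
    (hlaw : ∀ s, 0 < s → P.map (X s) = gaussianReal x s.toNNReal) (c : ℝ) :
    ∀ᵐ ω ∂P, ∀ᵐ s ∂volume.restrict (Ioi 0), X s ω ≠ c := by
  refine ae_ae_ne_of_map_singleton_eq_zero _ hmeas hpath <|
    (ae_restrict_mem measurableSet_Ioi).mono fun s hs => ?_
  rw [hlaw s hs]
  exact gaussianReal_absolutelyContinuous x (Real.toNNReal_pos.2 hs).ne' Real.volume_singleton

end AEContinuousPaths

section PathIntegral

variable {f : ℝ → ℝ≥0∞}

lemma ofReal_sub_le_setLIntegral_Ioc (hf : ∀ᵐ s ∂volume.restrict (Ioi 0), 1 ≤ f s)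
    {a : ℝ} (ha : 0 ≤ a) (b : ℝ) : ENNReal.ofReal (b - a) ≤ ∫⁻ s in Ioc a b, f s := by
  have hab : ∀ᵐ s ∂volume.restrict (Ioc a b), 1 ≤ f s :=
    ae_restrict_of_ae_restrict_of_subset (fun s hs => ha.trans_lt hs.1) hf
  calc ENNReal.ofReal (b - a) = ∫⁻ _ in Ioc a b, 1 := by rw [setLIntegral_one, Real.volume_Ioc]
    _ ≤ ∫⁻ s in Ioc a b, f s := lintegral_mono_ae hab

lemma strictMonoOn_setLIntegral_Ioc (hfin : ∀ t, ∫⁻ s in Ioc 0 t, f s ≠ ∞)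
    (hf : ∀ᵐ s ∂volume.restrict (Ioi 0), 1 ≤ f s) :
    StrictMonoOn (fun t => ∫⁻ s in Ioc 0 t, f s) (Ici 0) := by
  intro a ha b _ hab
  have hpos : 0 < ∫⁻ s in Ioc a b, f s :=
    (ENNReal.ofReal_pos.2 (sub_pos.2 hab)).trans_le (ofReal_sub_le_setLIntegral_Ioc hf ha b)
  dsimp only
  rw [← Ioc_union_Ioc_eq_Ioc ha hab.le, lintegral_union measurableSet_Ioc
    (Ioc_disjoint_Ioc_of_le le_rfl)]
  exact ENNReal.lt_add_right (hfin a) hpos.ne'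

lemma tendsto_setLIntegral_Ioc_atTop (hf : ∀ᵐ s ∂volume.restrict (Ioi 0), 1 ≤ f s) :
    Tendsto (fun t => ∫⁻ s in Ioc 0 t, f s) atTop (𝓝 ∞) := by
  refine tendsto_nhds_top_mono ENNReal.tendsto_ofReal_atTop (Eventually.of_forall fun t => ?_)
  simpa using ofReal_sub_le_setLIntegral_Ioc hf le_rfl t

lemma continuousOn_toReal_setLIntegral_Ioc (hmeas : AEMeasurable f)
    (hfin : ∀ t, ∫⁻ s in Ioc 0 t, f s ≠ ∞) :
    ContinuousOn (fun t => (∫⁻ s in Ioc 0 t, f s).toReal) (Ici 0) := by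
  have htoReal : ∀ t, (∫⁻ s in Ioc 0 t, f s).toReal = ∫ s in Ioc 0 t, (f s).toReal := fun t =>
    (integral_toReal hmeas.restrict (ae_lt_top' hmeas.restrict (hfin t))).symm
  simp_rw [htoReal]
  intro t₀ ht₀
  have hint : IntegrableOn (fun s => (f s).toReal) (Icc 0 (t₀ + 1)) := by
    refine integrable_toReal_of_lintegral_ne_top hmeas.restrict ?_
    rw [setLIntegral_congr Ioc_ae_eq_Icc.symm]
    exact hfin _
  refine (intervalIntegral.continuousOn_primitive hint t₀ ⟨ht₀, by linarith⟩
    ).mono_of_mem_nhdsWithin ?_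
  filter_upwards [self_mem_nhdsWithin, mem_nhdsWithin_of_mem_nhds (Iio_mem_nhds (lt_add_one t₀))]
    with t ht ht' using ⟨ht, ht'.le⟩

end PathIntegral

theorem stmt_15_general {Ω : Type*} [MeasurableSpace Ω] (P : Measure Ω) [IsProbabilityMeasure P]
    (B : ℝ → Ω → ℝ) (hmeas : ∀ t, Measurable (B t))
    (h0 : ∀ᵐ ω ∂P, B 0 ω = 0)
    (hpath : ∀ᵐ ω ∂P, Continuous fun t => B t ω)
    (hincr : ∀ s t : ℝ, 0 ≤ s → s ≤ t →
      P.map (fun ω => B t ω - B s ω) = gaussianReal 0 (Real.toNNReal (t - s)))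
    (α : ℝ) (hα : α ∈ Set.Ioo (0:ℝ) (1/2)) (x : ℝ) :
    ∀ᵐ ω ∂P,
      (∀ t : ℝ, 0 ≤ t →
        (∫⁻ s in Set.Ioc (0:ℝ) t,
          ENNReal.ofReal ((|x + B s ω| ^ α / (1 + |x + B s ω| ^ α))⁻¹ ^ 2)) < ⊤) ∧
      StrictMonoOn (fun t : ℝ =>
        ∫⁻ s in Set.Ioc (0:ℝ) t,
          ENNReal.ofReal ((|x + B s ω| ^ α / (1 + |x + B s ω| ^ α))⁻¹ ^ 2))
        (Set.Ici 0) ∧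
      ContinuousOn (fun t : ℝ =>
        (∫⁻ s in Set.Ioc (0:ℝ) t,
          ENNReal.ofReal ((|x + B s ω| ^ α / (1 + |x + B s ω| ^ α))⁻¹ ^ 2)).toReal)
        (Set.Ici 0) ∧
      Tendsto (fun t : ℝ =>
        ∫⁻ s in Set.Ioc (0:ℝ) t,
          ENNReal.ofReal ((|x + B s ω| ^ α / (1 + |x + B s ω| ^ α))⁻¹ ^ 2))
        atTop (nhds ⊤) := by
  set X : ℝ → Ω → ℝ := fun s ω => x + B s ω
  have hXmeas : ∀ s, Measurable (X s) := fun s => (hmeas s).const_add x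
  have hXpath : ∀ᵐ ω ∂P, Continuous fun s => X s ω := hpath.mono fun ω h => h.const_add x
  have hXlaw : ∀ s, 0 < s → P.map (X s) = gaussianReal x s.toNNReal := fun s hs =>
    map_const_add_eq_gaussianReal h0 (hmeas s) (by simpa using hincr 0 s le_rfl hs.le) x
  have hfin : ∀ᵐ ω ∂P, ∀ n : ℕ, ∫⁻ s in Ioc 0 (n : ℝ), sigmaNegSq α (X s ω) < ∞ :=
    ae_all_iff.2 fun n => ae_setLIntegral_sigmaNegSq_lt_top hXmeas hXpath hXlaw hα n
  filter_upwards [hXpath, hfin, ae_ae_ne_of_map_eq_gaussianReal hXmeas hXpath hXlaw 0]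
    with ω hcont hfin_n hlevel
  have hfin_t : ∀ t, ∫⁻ s in Ioc 0 t, sigmaNegSq α (X s ω) ≠ ∞ := fun t =>
    ne_top_of_le_ne_top (hfin_n ⌈t⌉₊).ne
      (lintegral_mono_set (Ioc_subset_Ioc_right (Nat.le_ceil t)))
  have hone : ∀ᵐ s ∂volume.restrict (Ioi 0), 1 ≤ sigmaNegSq α (X s ω) :=
    hlevel.mono fun s hs => one_le_sigmaNegSq α hs
  exact ⟨fun t _ => (hfin_t t).lt_top, strictMonoOn_setLIntegral_Ioc hfin_t hone,
    continuousOn_toReal_setLIntegral_Ioc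
      ((measurable_sigmaNegSq α).comp hcont.measurable).aemeasurable hfin_t,
    tendsto_setLIntegral_Ioc_atTop hone⟩

/-- For a standard one-dimensional Brownian motion `W` and `α ∈ (0,1/2)`, the additive
functional `S_t^x = ∫₀^t σ_α(x + W_s)⁻² ds` is a.s. finite for all `t`, strictly increasing
and continuous in `t`, and tends to `∞` as `t → ∞`. -/
theorem stmt_15 {Ω : Type*} [MeasurableSpace Ω] (P : Measure Ω) [IsProbabilityMeasure P]
    (B : ℝ → Ω → ℝ) (hmeas : ∀ t, Measurable (B t))
    (h0 : ∀ᵐ ω ∂P, B 0 ω = 0)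
    (hpath : ∀ᵐ ω ∂P, Continuous fun t => B t ω)
    (hincr : ∀ s t : ℝ, 0 ≤ s → s ≤ t →
      P.map (fun ω => B t ω - B s ω) = gaussianReal 0 (Real.toNNReal (t - s)))
    (hindep : ∀ (n : ℕ) (ts : Fin (n + 1) → ℝ), Monotone ts → (∀ i, 0 ≤ ts i) →
      iIndepFun
        (fun (i : Fin n) ω => B (ts i.succ) ω - B (ts i.castSucc) ω) P)
    (α : ℝ) (hα : α ∈ Set.Ioo (0:ℝ) (1/2)) (x : ℝ) :
    ∀ᵐ ω ∂P,
      (∀ t : ℝ, 0 ≤ t →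
        (∫⁻ s in Set.Ioc (0:ℝ) t,
          ENNReal.ofReal ((|x + B s ω| ^ α / (1 + |x + B s ω| ^ α))⁻¹ ^ 2)) < ⊤) ∧
      StrictMonoOn (fun t : ℝ =>
        ∫⁻ s in Set.Ioc (0:ℝ) t,
          ENNReal.ofReal ((|x + B s ω| ^ α / (1 + |x + B s ω| ^ α))⁻¹ ^ 2))
        (Set.Ici 0) ∧
      ContinuousOn (fun t : ℝ =>
        (∫⁻ s in Set.Ioc (0:ℝ) t,
          ENNReal.ofReal ((|x + B s ω| ^ α / (1 + |x + B s ω| ^ α))⁻¹ ^ 2)).toReal)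
        (Set.Ici 0) ∧
      Tendsto (fun t : ℝ =>
        ∫⁻ s in Set.Ioc (0:ℝ) t,
          ENNReal.ofReal ((|x + B s ω| ^ α / (1 + |x + B s ω| ^ α))⁻¹ ^ 2))
        atTop (nhds ⊤) :=
  stmt_15_general P B hmeas h0 hpath hincr α hα x
end
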